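/- arXiv:0812.4044 — 6 statements merged into one kernel-verified Lean document; each statement's English description precedes it below -/
import Mathlib

section
/- Fix x and a conditional distribution over reward vectors (r_1, r_{-1}) ∈ [0,1]², and an action distribution p with p(1), p(-1) > 0. Suppose E[r_1] > E[r_{-1}] and the classifier predicts −1. Then the difference between the expected importance weight of (mis-)label 1 and that of label −1 under the Binary Offset reduction equals E[r_1 − r_{-1}]. That is, E[(1/2 − r_{-1})_+ + (r_1 − 1/2)_+] − E[(1/2 − r_1)_+ + (r_{-1} − 1/2)_+] = E[r_1] − E[r_{-1}], where (z)_+ = max(z,0). -/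
open MeasureTheory

section OffsetWeights

variable {α : Type*} [AddCommGroup α] [LinearOrder α] [IsOrderedAddMonoid α]

theorem max_sub_zero_sub_max_sub_zero (a b : α) :
    max (a - b) 0 - max (b - a) 0 = a - b := by
  simpa only [neg_sub] using max_zero_sub_max_neg_zero_eq_self (a - b)

theorem offset_weights_sub (h r₁ r₂ : α) :
    (max (h - r₂) 0 + max (r₁ - h) 0) - (max (h - r₁) 0 + max (r₂ - h) 0) = r₁ - r₂ := by
  calc (max (h - r₂) 0 + max (r₁ - h) 0) - (max (h - r₁) 0 + max (r₂ - h) 0)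
      = (max (r₁ - h) 0 - max (h - r₁) 0) - (max (r₂ - h) 0 - max (h - r₂) 0) := by abel
    _ = (r₁ - h) - (r₂ - h) := by
      rw [max_sub_zero_sub_max_sub_zero, max_sub_zero_sub_max_sub_zero]
    _ = r₁ - r₂ := by abel

end OffsetWeights

theorem binary_offset_importance_regret_identity_general
    (μ : Measure (ℝ × ℝ)) [IsProbabilityMeasure μ]
    (hr : ∀ᵐ q ∂μ, q.1 ∈ Set.Icc (0:ℝ) 1 ∧ q.2 ∈ Set.Icc (0:ℝ) 1) :
    (∫ q, (max (1/2 - q.2) 0 + max (q.1 - 1/2) 0) ∂μ)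
      - (∫ q, (max (1/2 - q.1) 0 + max (q.2 - 1/2) 0) ∂μ)
    = (∫ q, q.1 ∂μ) - (∫ q, q.2 ∂μ) := by
  have h₁ : Integrable (fun q : ℝ × ℝ => q.1) μ :=
    .of_mem_Icc 0 1 measurable_fst.aemeasurable (hr.mono fun _ hq => hq.1)
  have h₂ : Integrable (fun q : ℝ × ℝ => q.2) μ :=
    .of_mem_Icc 0 1 measurable_snd.aemeasurable (hr.mono fun _ hq => hq.2)
  rw [← integral_sub (by fun_prop) (by fun_prop), ← integral_sub h₁ h₂]
  simp only [offset_weights_sub]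

/-- conditioned on `x`, with rewards `(r₁, r₋₁) ∈ [0,1]²` distributed
according to `μ`, an action distribution with `p(1), p(-1) > 0`, `E[r₁] > E[r₋₁]`,
and the classifier predicting `−1`, the difference between the expected importance
weight of label `1` and that of label `−1` under the Binary Offset reduction equals
`E[r₁ − r₋₁]`:
`E[(1/2 − r₋₁)⁺ + (r₁ − 1/2)⁺] − E[(1/2 − r₁)⁺ + (r₋₁ − 1/2)⁺] = E[r₁] − E[r₋₁]`.
Here `q.1 = r₁` and `q.2 = r₋₁`, and `(z)⁺ = max z 0`. -/
theorem binary_offset_importance_regret_identity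
    (μ : Measure (ℝ × ℝ)) [IsProbabilityMeasure μ]
    (hr : ∀ᵐ q ∂μ, q.1 ∈ Set.Icc (0:ℝ) 1 ∧ q.2 ∈ Set.Icc (0:ℝ) 1)
    (p1 pm1 : ℝ) (hp1 : 0 < p1) (hpm1 : 0 < pm1) (hsum : p1 + pm1 = 1)
    (hgt : ∫ q, q.2 ∂μ < ∫ q, q.1 ∂μ)
    (c : ℝ) (hc : c = -1) :
    (∫ q, (max (1/2 - q.2) 0 + max (q.1 - 1/2) 0) ∂μ)
      - (∫ q, (max (1/2 - q.1) 0 + max (q.2 - 1/2) 0) ∂μ)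
    = (∫ q, q.1 ∂μ) - (∫ q, q.2 ∂μ) :=
  binary_offset_importance_regret_identity_general μ hr
end

section
/- Tightness of the Binary Offset bound: there exists a 2-action partial label distribution D (e.g., reward vector always (0,1) for every x) such that for every v ∈ [0,1] there is a (randomized) classifier c with policy regret exactly v and binary error-rate regret on the induced distribution Q_D exactly v. -/
open MeasureTheory

/-! Put all the mass on the single reward vector `(0, 1)`. A classifier predicting label `1`
with probability `t` then has value `1 - t`, while the induced binary problem has weights
`w₁ = 0` and `w₋₁ = 1`, so its normalised error rate is `t`. Both optima are attained at `t = 0`,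
hence both regrets equal `t`, and `t = v` gives the claim. -/

theorem ciInf_eval_of_forall_mem_unitInterval {X : Type*} (x : X) :
    ⨅ f : {f : X → ℝ // ∀ x, f x ∈ Set.Icc (0:ℝ) 1}, f.1 x = 0 :=
  IsLeast.csInf_eq ⟨⟨⟨0, fun _ => ⟨le_rfl, zero_le_one⟩⟩, rfl⟩,
    by rintro _ ⟨f, rfl⟩; exact (f.2 x).1⟩

theorem ciSup_one_sub_eval_of_forall_mem_unitInterval {X : Type*} (x : X) :
    ⨆ f : {f : X → ℝ // ∀ x, f x ∈ Set.Icc (0:ℝ) 1}, (1 - f.1 x) = 1 :=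
  IsGreatest.csSup_eq ⟨⟨⟨0, fun _ => ⟨le_rfl, zero_le_one⟩⟩, sub_zero 1⟩,
    by rintro _ ⟨f, rfl⟩; exact sub_le_self 1 (f.2 x).1⟩

/-- tightness of the Binary Offset bound: there exists a 2-action partial
label distribution `D` over `X × [0,1]²` (with `X = PUnit`; e.g. reward vector always
`(0,1)`) such that for every `v ∈ [0,1]` there is a randomized classifier — given by
`g : X → ℝ` with `g x ∈ [0,1]` the probability of predicting label `1` — whose policy
regret is exactly `v` and whose binary error-rate regret on the induced distribution
`Q_D` is exactly `v`.  Values and error rates extend linearly to randomized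
classifiers. -/
theorem binary_offset_regret_tight :
    ∃ D : Measure (PUnit × ℝ × ℝ), IsProbabilityMeasure D ∧
      (∀ᵐ q ∂D, q.2.1 ∈ Set.Icc (0:ℝ) 1 ∧ q.2.2 ∈ Set.Icc (0:ℝ) 1) ∧
      (let η : (PUnit → ℝ) → ℝ := fun g => ∫ q, (g q.1 * q.2.1 + (1 - g q.1) * q.2.2) ∂D
       let w1 : ℝ × ℝ → ℝ := fun r =>
        (if 1/2 < r.1 then |r.1 - 1/2| else 0) + (if r.2 < 1/2 then |r.2 - 1/2| else 0)
       let wm1 : ℝ × ℝ → ℝ := fun r =>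
        (if 1/2 < r.2 then |r.2 - 1/2| else 0) + (if r.1 < 1/2 then |r.1 - 1/2| else 0)
       let W : ℝ := ∫ q, (w1 q.2 + wm1 q.2) ∂D
       let err : (PUnit → ℝ) → ℝ := fun g =>
        (∫ q, (g q.1 * wm1 q.2 + (1 - g q.1) * w1 q.2) ∂D) / W
       ∀ v ∈ Set.Icc (0:ℝ) 1, ∃ g : PUnit → ℝ,
        (∀ x, g x ∈ Set.Icc (0:ℝ) 1) ∧
        (⨆ g' : {f : PUnit → ℝ // ∀ x, f x ∈ Set.Icc (0:ℝ) 1}, η g'.1) - η g = v ∧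
        err g - (⨅ g' : {f : PUnit → ℝ // ∀ x, f x ∈ Set.Icc (0:ℝ) 1}, err g'.1) = v) := by
  refine ⟨Measure.dirac (PUnit.unit, ((0:ℝ), (1:ℝ))), inferInstance, by simp [ae_dirac_eq], ?_⟩
  intro η w1 wm1 W err v hv
  have hη : ∀ g, η g = 1 - g PUnit.unit := fun g => by simp [η, integral_dirac]
  have hw1 : w1 (0, 1) = 0 := by norm_num [w1]
  have hwm1 : wm1 (0, 1) = 1 := by norm_num [wm1, abs_of_pos]
  have herr : ∀ g, err g = g PUnit.unit := fun g => by simp [err, W, integral_dirac, hw1, hwm1]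
  refine ⟨fun _ => v, fun _ => hv, ?_, ?_⟩
  · simp only [hη, ciSup_one_sub_eval_of_forall_mem_unitInterval]
    ring
  · simp only [herr, ciInf_eval_of_forall_mem_unitInterval]
    ring
end

section
/- Node importance-weighted regret equals reward gap: fix x and a conditional distribution over rewards (r_a, r_{a'}) ∈ [0,1]² with E[r_{a'}] ≥ E[r_a]. Then E[(r_{a'} − 1/2)_+ + (1/2 − r_a)_+] − E[(r_a − 1/2)_+ + (1/2 − r_{a'})_+] = E[r_{a'} − r_a] ≥ 0. Hence if a classifier at the node predicts a, its importance-weighted regret equals E[r_{a'} − r_a], and if it predicts a', its regret is 0. -/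
open MeasureTheory Set

/-! Pointwise, `(r' - c)₊ + (c - r)₊ - ((r - c)₊ + (c - r')₊) = (r' - c) - (r - c) = r' - r`, since
`z₊ - (-z)₊ = z`; all integrands are bounded, so the identity passes to expectations by linearity. -/

theorem max_sub_add_max_sub_sub_max_sub_add_max_sub {α : Type*} [AddCommGroup α] [LinearOrder α]
    [IsOrderedAddMonoid α] (c x y : α) :
    max (y - c) 0 + max (c - x) 0 - (max (x - c) 0 + max (c - y) 0) = y - x := by
  have hy := max_zero_sub_max_neg_zero_eq_self (y - c)
  have hx := max_zero_sub_max_neg_zero_eq_self (x - c)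
  rw [neg_sub] at hx hy
  calc max (y - c) 0 + max (c - x) 0 - (max (x - c) 0 + max (c - y) 0)
      = (max (y - c) 0 - max (c - y) 0) - (max (x - c) 0 - max (c - x) 0) := by abel
    _ = y - x := by rw [hx, hy]; abel

theorem integrable_of_ae_mem_Icc {Ω : Type*} [MeasurableSpace Ω] {μ : Measure Ω}
    [IsFiniteMeasure μ] {f : Ω → ℝ} {a b : ℝ} (hf : AEStronglyMeasurable f μ)
    (hab : ∀ᵐ ω ∂μ, f ω ∈ Icc a b) : Integrable f μ :=
  .of_bound hf (max |a| |b|) (hab.mono fun _ h => abs_le_max_abs_abs h.1 h.2)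

/-- node importance-weighted regret equals the reward gap.  Fix `x` and a
conditional distribution `μ` over rewards `(r_a, r_{a'}) ∈ [0,1]²` (with `q.1 = r_a`,
`q.2 = r_{a'}`) satisfying `E[r_{a'}] ≥ E[r_a]`.  Then
`E[(r_{a'} − 1/2)⁺ + (1/2 − r_a)⁺] − E[(r_a − 1/2)⁺ + (1/2 − r_{a'})⁺] = E[r_{a'}] − E[r_a] ≥ 0`.
Hence a classifier at the node predicting `a` has importance-weighted regret
`E[r_{a'} − r_a]`, and one predicting `a'` has regret `0`. -/
theorem offset_tree_node_regret_identity
    (μ : Measure (ℝ × ℝ)) [IsProbabilityMeasure μ]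
    (hr : ∀ᵐ q ∂μ, q.1 ∈ Set.Icc (0:ℝ) 1 ∧ q.2 ∈ Set.Icc (0:ℝ) 1)
    (hle : ∫ q, q.1 ∂μ ≤ ∫ q, q.2 ∂μ) :
    ((∫ q, (max (q.2 - 1/2) 0 + max (1/2 - q.1) 0) ∂μ)
        - (∫ q, (max (q.1 - 1/2) 0 + max (1/2 - q.2) 0) ∂μ)
      = (∫ q, q.2 ∂μ) - (∫ q, q.1 ∂μ))
    ∧ 0 ≤ (∫ q, q.2 ∂μ) - (∫ q, q.1 ∂μ) := by
  have h₁ : Integrable (fun q : ℝ × ℝ => q.1) μ :=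
    integrable_of_ae_mem_Icc measurable_fst.aestronglyMeasurable (hr.mono fun _ hq => hq.1)
  have h₂ : Integrable (fun q : ℝ × ℝ => q.2) μ :=
    integrable_of_ae_mem_Icc measurable_snd.aestronglyMeasurable (hr.mono fun _ hq => hq.2)
  refine ⟨?_, sub_nonneg.2 hle⟩
  rw [← integral_sub (by fun_prop) (by fun_prop), ← integral_sub h₂ h₁]
  simp only [max_sub_add_max_sub_sub_max_sub_add_max_sub]
end

section
/- Offset Tree induction step: let T be a binary tree whose leaves are actions with expected rewards μ_a ∈ [0,1] (for a fixed x). Each internal node v, with input actions a (from left subtree output) and a' (from right), has importance-weighted regret wreg_v = (μ_{winner'} − μ_{winner})_+ where winner is the action chosen at v and winner' the other input; formally wreg_v = max(μ_a, μ_{a'}) − μ_{chosen}. Then the regret of the root's output action, max_{leaf y} μ_y − μ_{output}, is at most the sum over internal nodes v of wreg_v. -/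
/-- A finite full binary tree whose leaves are labeled by actions (naturals) and each
of whose internal nodes deterministically selects one of its two children's output
actions (`true` = left child). -/
inductive ChoiceTree where
  | leaf : ℕ → ChoiceTree
  | node : ChoiceTree → ChoiceTree → Bool → ChoiceTree

namespace ChoiceTree

/-- The output action of the tree. -/
def output : ChoiceTree → ℕ
  | leaf a => a
  | node l r b => if b then l.output else r.output

/-- The list of actions at the leaves. -/
def leaves : ChoiceTree → List ℕ
  | leaf a => [a]
  | node l r _ => l.leaves ++ r.leaves

/-- The sum over internal nodes `v` of the importance-weighted regret
`wreg_v = max(μ a, μ a') − μ (chosen)`, where `a, a'` are the outputs of the two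
subtrees of `v` and `chosen` is the one selected at `v`. -/
def wregSum (μ : ℕ → ℝ) : ChoiceTree → ℝ
  | leaf _ => 0
  | node l r b =>
      wregSum μ l + wregSum μ r +
        (max (μ l.output) (μ r.output) - μ (if b then l.output else r.output))

end ChoiceTree

namespace ChoiceTree

variable (μ : ℕ → ℝ)

lemma wregSum_node_add_output (l r : ChoiceTree) (b : Bool) :
    (node l r b).wregSum μ + μ (node l r b).output =
      l.wregSum μ + r.wregSum μ + max (μ l.output) (μ r.output) := by
  rw [wregSum, output]
  ring

lemma output_node_le_max (l r : ChoiceTree) (b : Bool) :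
    μ (node l r b).output ≤ max (μ l.output) (μ r.output) := by
  cases b
  · exact le_max_right _ _
  · exact le_max_left _ _

lemma wregSum_nonneg (T : ChoiceTree) : 0 ≤ T.wregSum μ := by
  induction T with
  | leaf _ => exact le_rfl
  | node l r b ihl ihr =>
    have h := wregSum_node_add_output μ l r b
    linarith [output_node_le_max μ l r b]

/-- Along the path to a leaf `y`, each node loses at most its own regret, and every subtree
off the path contributes a nonnegative amount. -/
lemma le_output_add_wregSum (T : ChoiceTree) : ∀ y ∈ T.leaves, μ y ≤ μ T.output + T.wregSum μ := by
  induction T with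
  | leaf _ =>
    intro y hy
    rw [leaves, List.mem_singleton] at hy
    simp [hy, output, wregSum]
  | node l r b ihl ihr =>
    intro y hy
    have h := wregSum_node_add_output μ l r b
    rcases List.mem_append.1 hy with hy | hy
    · linarith [ihl y hy, wregSum_nonneg μ r, le_max_left (μ l.output) (μ r.output)]
    · linarith [ihr y hy, wregSum_nonneg μ l, le_max_right (μ l.output) (μ r.output)]

end ChoiceTree

theorem offset_tree_induction_general (T : ChoiceTree) (μ : ℕ → ℝ) :
    ∀ y ∈ T.leaves, μ y - μ T.output ≤ T.wregSum μ :=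
  fun y hy => sub_le_iff_le_add'.2 (T.le_output_add_wregSum μ y hy)

/-- Offset Tree induction step: for any binary tree `T` over actions
with distinct leaf labels and expected rewards `μ_a ∈ [0,1]`, the regret of the root's
output action, `max_{leaf y} μ_y − μ_{output}`, is at most the sum over internal nodes
of their importance-weighted regrets. -/
theorem offset_tree_induction (T : ChoiceTree) (μ : ℕ → ℝ)
    (hdistinct : T.leaves.Nodup) (hμ : ∀ a, μ a ∈ Set.Icc (0:ℝ) 1) :
    ∀ y ∈ T.leaves, μ y - μ T.output ≤ T.wregSum μ :=
  offset_tree_induction_general T μ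
end

section
/- Tightness of the regression bound: there exists a k-action partial label problem D and a regressor f such that reg_η(π_f, D) = sqrt(2k · reg_r(f, P_D)). In particular, the square-root dependence on regression regret is unavoidable for the argmax regression reduction. -/
/-!
With a single context and deterministic rewards `r`, the best regressor `r` has zero loss and
the best policy earns `max r`. A regressor that predicts the midpoint of `r a` and `r b` on a
suboptimal action `a` and the best action `b`, and `r` elsewhere, is off by `Δ / 2` on exactly
two of the `k` actions, where `Δ = r b - r a`; its regression regret is `Δ² / (2k)`. Since it
ties on `a` and `b`, the argmax policy may choose `a`, which has policy regret
`Δ = √(2k · Δ² / (2k))`.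
-/

open MeasureTheory

section Midpoint

variable {ι : Type*} [DecidableEq ι]

noncomputable def midpointRegressor (r : ι → ℝ) (a b : ι) : ι → ℝ :=
  Function.update (Function.update r a ((r a + r b) / 2)) b ((r a + r b) / 2)

variable (r : ι → ℝ) {a b : ι}

lemma midpointRegressor_apply_left (hab : a ≠ b) :
    midpointRegressor r a b a = (r a + r b) / 2 := by
  simp [midpointRegressor, hab]

lemma midpointRegressor_apply_right : midpointRegressor r a b b = (r a + r b) / 2 := by
  simp [midpointRegressor]

lemma midpointRegressor_apply_of_ne {i : ι} (ha : i ≠ a) (hb : i ≠ b) :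
    midpointRegressor r a b i = r i := by
  simp [midpointRegressor, ha, hb]

lemma midpointRegressor_le_apply_left (hab : a ≠ b)
    (hr : ∀ i, i ≠ a → i ≠ b → r i ≤ (r a + r b) / 2) (i : ι) :
    midpointRegressor r a b i ≤ midpointRegressor r a b a := by
  rw [midpointRegressor_apply_left r hab]
  by_cases ha : i = a
  · rw [ha, midpointRegressor_apply_left r hab]
  by_cases hb : i = b
  · rw [hb, midpointRegressor_apply_right]
  rw [midpointRegressor_apply_of_ne r ha hb]
  exact hr i ha hb

lemma sum_sq_midpointRegressor_sub [Fintype ι] (hab : a ≠ b) :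
    ∑ i, (midpointRegressor r a b i - r i) ^ 2 = (r b - r a) ^ 2 / 2 := by
  rw [Fintype.sum_eq_add a b hab fun i ⟨ha, hb⟩ => by
      rw [midpointRegressor_apply_of_ne r ha hb, sub_self, sq, zero_mul],
    midpointRegressor_apply_left r hab, midpointRegressor_apply_right]
  ring

end Midpoint

section PartialLabel

variable {X : Type*} [MeasurableSpace X] {k : ℕ}

noncomputable def policyValue (D : Measure (X × (Fin k → ℝ))) (pol : X → Fin k) : ℝ :=
  ∫ q, q.2 (pol q.1) ∂D

noncomputable def policyRegret (D : Measure (X × (Fin k → ℝ))) (pol : X → Fin k) : ℝ :=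
  (⨆ pol' : X → Fin k, policyValue D pol') - policyValue D pol

noncomputable def regressionLoss (D : Measure (X × (Fin k → ℝ))) (f : X → Fin k → ℝ) : ℝ :=
  ∫ q, (1 / k : ℝ) * ∑ a, (f q.1 a - q.2 a) ^ 2 ∂D

noncomputable def regressionRegret (D : Measure (X × (Fin k → ℝ))) (f : X → Fin k → ℝ) : ℝ :=
  regressionLoss D f - ⨅ f' : X → Fin k → ℝ, regressionLoss D f'

variable [MeasurableSingletonClass X] (x : X) (r : Fin k → ℝ)

lemma policyValue_dirac (pol : X → Fin k) :
    policyValue (Measure.dirac (x, r)) pol = r (pol x) :=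
  integral_dirac _ _

lemma regressionLoss_dirac (f : X → Fin k → ℝ) :
    regressionLoss (Measure.dirac (x, r)) f = (1 / k : ℝ) * ∑ a, (f x a - r a) ^ 2 :=
  integral_dirac _ _

lemma iSup_policyValue_dirac {b : Fin k} (hb : ∀ i, r i ≤ r b) :
    ⨆ pol : X → Fin k, policyValue (Measure.dirac (x, r)) pol = r b := by
  have : Nonempty (Fin k) := ⟨b⟩
  apply IsLUB.ciSup_eq
  refine IsGreatest.isLUB ⟨⟨fun _ => b, policyValue_dirac x r _⟩, ?_⟩
  rintro _ ⟨pol, rfl⟩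
  rw [policyValue_dirac]
  exact hb _

lemma iInf_regressionLoss_dirac :
    ⨅ f : X → Fin k → ℝ, regressionLoss (Measure.dirac (x, r)) f = 0 := by
  apply IsGLB.ciInf_eq
  refine IsLeast.isGLB ⟨⟨fun _ => r, ?_⟩, ?_⟩
  · simp [regressionLoss_dirac]
  · rintro _ ⟨f, rfl⟩
    rw [regressionLoss_dirac]
    positivity

theorem policyRegret_eq_sqrt_regressionRegret_midpointRegressor {a b : Fin k} (hab : a ≠ b)
    (hb : ∀ i, r i ≤ r b) :
    policyRegret (Measure.dirac (x, r)) (fun _ => a) =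
      √(2 * k * regressionRegret (Measure.dirac (x, r)) fun _ => midpointRegressor r a b) := by
  have hk : (k : ℝ) ≠ 0 := Nat.cast_ne_zero.2 (Fin.pos a).ne'
  have h2k : 2 * k * regressionRegret (Measure.dirac (x, r)) (fun _ => midpointRegressor r a b)
      = (r b - r a) ^ 2 := by
    rw [regressionRegret, iInf_regressionLoss_dirac, regressionLoss_dirac,
      sum_sq_midpointRegressor_sub r hab]
    field_simp
    ring
  rw [h2k, Real.sqrt_sq (sub_nonneg.2 (hb a)), policyRegret, iSup_policyValue_dirac x r hb,
    policyValue_dirac]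

end PartialLabel

/-- tightness of the regression bound: there exists a `k`-action partial
label problem `D` (over `X × [0,1]^k`, with `X = PUnit`) and a regressor `f`, with an
argmax policy `π` for `f`, such that the policy regret of `π` equals
`sqrt(2k · reg_r(f, P_D))` exactly, where `P_D` is the induced regression problem with
uniform action choice and `reg_r` is squared-error regret. -/
theorem regression_reduction_bound_tight :
    ∃ (k : ℕ), 2 ≤ k ∧
    ∃ (D : Measure (PUnit × (Fin k → ℝ))), IsProbabilityMeasure D ∧
      (∀ᵐ q ∂D, ∀ a, q.2 a ∈ Set.Icc (0:ℝ) 1) ∧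
      ∃ (f : PUnit → Fin k → ℝ) (π : PUnit → Fin k),
        (∀ x a, f x a ≤ f x (π x)) ∧
        (let η : (PUnit → Fin k) → ℝ := fun pol => ∫ q, q.2 (pol q.1) ∂D
         let ℓ : (PUnit → Fin k → ℝ) → ℝ :=
          fun f' => ∫ q, (1 / k : ℝ) * ∑ a, (f' q.1 a - q.2 a)^2 ∂D
         let regr : ℝ := ℓ f - ⨅ f' : PUnit → Fin k → ℝ, ℓ f'
         (⨆ pol : PUnit → Fin k, η pol) - η π = Real.sqrt (2 * k * regr)) := by
  let r : Fin 2 → ℝ := ![0, 1]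
  have hr_mem : ∀ i, r i ∈ Set.Icc (0 : ℝ) 1 := by
    intro i; fin_cases i <;> simp [r]
  have hr_le : ∀ i, r i ≤ r 1 := fun i => (hr_mem i).2.trans_eq (by simp [r])
  refine ⟨2, le_rfl, Measure.dirac (PUnit.unit, r), inferInstance, ?_,
    fun _ => midpointRegressor r 0 1, fun _ => 0, ?_,
    policyRegret_eq_sqrt_regressionRegret_midpointRegressor PUnit.unit r Fin.zero_ne_one hr_le⟩
  · rw [ae_dirac_eq]
    exact Filter.eventually_pure.2 hr_mem
  · intro _ i
    exact midpointRegressor_le_apply_left r Fin.zero_ne_one (fun _ h0 h1 => by omega) i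
end

section
/- Importance-weighted multiclass reduction identity: fix x, a conditional distribution over rewards r ∈ [0,1]^k, and uniform action-choosing distribution p(a) = 1/k. Under Zadrozny's transform (observed (x,a,r_a) becomes multiclass example with label a and weight r_a/p(a)), the expected importance-weighted multiclass loss of predicting action a equals E[Σ_{a'≠a} r_{a'}]. Consequently, the importance-weighted regret of predicting a versus the optimal a* equals E[r_{a*} − r_a], the policy regret. -/
/-!
The logging probability `1/k` of each action cancels its importance weight `r a' / (1/k)`, so
the transformed loss of predicting `a` is pointwise `∑_{a' ≠ a} r a'`. Two such sums, over the
complements of `a` and of `a*`, differ only by `r a* - r a`, and linearity of the integral turns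
this into the policy regret.
-/

open MeasureTheory Finset

section

variable {ι : Type*} [Fintype ι] [DecidableEq ι]

theorem sum_filter_ne_mul_div_cancel {K : Type*} [Field K] (p r : ι → K) (hp : ∀ i, p i ≠ 0)
    (a : ι) :
    ∑ i ∈ univ.filter (· ≠ a), p i * (r i / p i) = ∑ i ∈ univ.filter (· ≠ a), r i :=
  sum_congr rfl fun i _ => mul_div_cancel₀ _ (hp i)

theorem Finset.sum_filter_ne_sub_sum_filter_ne {G : Type*} [AddCommGroup G] (f : ι → G)
    (a b : ι) :
    ∑ i ∈ univ.filter (· ≠ a), f i - ∑ i ∈ univ.filter (· ≠ b), f i = f b - f a := by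
  rw [filter_ne', filter_ne', sum_erase_eq_sub (mem_univ a), sum_erase_eq_sub (mem_univ b)]
  abel

theorem integral_sum_filter_ne_sub_integral_sum_filter_ne {μ : Measure (ι → ℝ)}
    (hint : ∀ i, Integrable (fun r => r i) μ) (a b : ι) :
    ∫ r, ∑ i ∈ univ.filter (· ≠ a), r i ∂μ - ∫ r, ∑ i ∈ univ.filter (· ≠ b), r i ∂μ
      = ∫ r, (r b - r a) ∂μ := by
  rw [← integral_sub (integrable_finsetSum _ fun i _ => hint i)
    (integrable_finsetSum _ fun i _ => hint i)]
  simp only [Finset.sum_filter_ne_sub_sum_filter_ne]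

end

theorem iw_multiclass_reduction_identity_general
    (k : ℕ)
    (μ : Measure (Fin k → ℝ))
    (hint : ∀ a, Integrable (fun r => r a) μ) :
    (∀ a : Fin k,
        (∫ r, ∑ a' ∈ Finset.univ.filter (· ≠ a), (1 / k : ℝ) * (r a' / (1 / k : ℝ)) ∂μ)
          = ∫ r, ∑ a' ∈ Finset.univ.filter (· ≠ a), r a' ∂μ)
    ∧ (∀ a astar : Fin k,
        (∫ r, ∑ a' ∈ Finset.univ.filter (· ≠ a), (1 / k : ℝ) * (r a' / (1 / k : ℝ)) ∂μ)
          - (∫ r, ∑ a' ∈ Finset.univ.filter (· ≠ astar), (1 / k : ℝ) * (r a' / (1 / k : ℝ)) ∂μ)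
        = ∫ r, (r astar - r a) ∂μ) := by
  -- `1/k` is a genuine weight only because some action `a' : Fin k` exists, forcing `k ≠ 0`.
  have hweight (a' : Fin k) : (1 / k : ℝ) ≠ 0 :=
    one_div_ne_zero (Nat.cast_ne_zero.mpr a'.pos.ne')
  have hloss (a : Fin k) :
      (∫ r, ∑ a' ∈ Finset.univ.filter (· ≠ a), (1 / k : ℝ) * (r a' / (1 / k : ℝ)) ∂μ)
        = ∫ r, ∑ a' ∈ Finset.univ.filter (· ≠ a), r a' ∂μ := by
    congr 1 with r
    exact sum_filter_ne_mul_div_cancel (fun _ => (1 / k : ℝ)) r hweight a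
  refine ⟨hloss, fun a astar => ?_⟩
  rw [hloss a, hloss astar]
  exact integral_sum_filter_ne_sub_integral_sum_filter_ne hint a astar

/-- importance-weighted multiclass reduction identity.  Fix `x`, a
conditional distribution `μ` over reward vectors `r ∈ [0,1]^k`, and the uniform
action-choosing distribution `p(a) = 1/k`.  Under Zadrozny's transform, the expected
importance-weighted multiclass loss of predicting action `a` is
`E_r[Σ_{a'≠a} p(a')·(r_{a'}/p(a'))] = E[Σ_{a'≠a} r_{a'}]`, and consequently the
importance-weighted regret of predicting `a` versus `a*` equals the policy regret
`E[r_{a*} − r_a]`. -/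
theorem iw_multiclass_reduction_identity
    (k : ℕ) (hk : 1 ≤ k)
    (μ : Measure (Fin k → ℝ)) [IsProbabilityMeasure μ]
    (hr : ∀ᵐ r ∂μ, ∀ a, r a ∈ Set.Icc (0:ℝ) 1)
    (hint : ∀ a, Integrable (fun r => r a) μ) :
    (∀ a : Fin k,
        (∫ r, ∑ a' ∈ Finset.univ.filter (· ≠ a), (1 / k : ℝ) * (r a' / (1 / k : ℝ)) ∂μ)
          = ∫ r, ∑ a' ∈ Finset.univ.filter (· ≠ a), r a' ∂μ)
    ∧ (∀ a astar : Fin k,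
        (∫ r, ∑ a' ∈ Finset.univ.filter (· ≠ a), (1 / k : ℝ) * (r a' / (1 / k : ℝ)) ∂μ)
          - (∫ r, ∑ a' ∈ Finset.univ.filter (· ≠ astar), (1 / k : ℝ) * (r a' / (1 / k : ℝ)) ∂μ)
        = ∫ r, (r astar - r a) ∂μ) :=
  iw_multiclass_reduction_identity_general k μ hint
end
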